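/- arXiv:2105.13203 — 5 statements merged into one kernel-verified Lean document; each statement's English description precedes it below -/
import Mathlib

section
/- Let X ⊆ ℝⁿ and Y ⊆ ℝᵐ be nonempty convex compact sets and let F : ℝⁿ × ℝᵐ → ℝ be continuous on X × Y, convex in its first argument on X for every fixed y ∈ Y, and concave in its second argument on Y for every fixed x ∈ X. Let (x_t)_{t=1}^T ⊆ X and (y_t)_{t=1}^T ⊆ Y be arbitrary sequences, and suppose for each t there exist f_t ∈ ℝⁿ and g_t ∈ ℝᵐ such that F(x, y_t) ≥ F(x_t, y_t) + ⟨f_t, x − x_t⟩ for all x ∈ X and F(x_t, y) ≤ F(x_t, y_t) + ⟨g_t, y − y_t⟩ for all y ∈ Y. Set x̄_T = (1/T) Σ_{t=1}^T x_t and ȳ_T = (1/T) Σ_{t=1}^T y_t, and define the regrets R_{T,x} = Σ_{t=1}^T ⟨f_t, x_t⟩ − inf_{x∈X} Σ_{t=1}^T ⟨f_t, x⟩ and R_{T,y} = sup_{y∈Y} Σ_{t=1}^T ⟨g_t, y⟩ − Σ_{t=1}^T ⟨g_t, y_t⟩. Then sup_{y∈Y} F(x̄_T, y) − inf_{x∈X}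 F(x, ȳ_T) ≤ (R_{T,x} + R_{T,y}) / T. -/
/-!
Jensen's inequality for the convex `F (·, y')` and the concave `F (x', ·)` bounds
`F (x̄, y') - F (x', ȳ)` by the average of `F (xₜ, y') - F (x', yₜ)`. The subgradient inequalities
bound each of these terms by `⟪gₜ, y' - yₜ⟫ + ⟪fₜ, xₜ - x'⟫`, whose sum is at most the sum of the
two regrets. Taking the supremum over `y'` and the infimum over `x'` gives the claim.
-/

open scoped RealInnerProductSpace
open Finset

noncomputable section

theorem sSup_image_sub_sInf_image_le {α β : Type*} {X : Set α} {Y : Set β} {φ : β → ℝ}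
    {ψ : α → ℝ} {c : ℝ} (hX : X.Nonempty) (hY : Y.Nonempty)
    (h : ∀ y ∈ Y, ∀ x ∈ X, φ y - ψ x ≤ c) : sSup (φ '' Y) - sInf (ψ '' X) ≤ c := by
  rw [sub_le_iff_le_add]
  refine csSup_le (hY.image φ) ?_
  rintro _ ⟨y, hy, rfl⟩
  rw [← sub_le_iff_le_add']
  refine le_csInf (hX.image ψ) ?_
  rintro _ ⟨x, hx, rfl⟩
  linarith [h y hy x hx]

section UniformAverage

variable {ι E : Type*} [Fintype ι] [Nonempty ι] [AddCommGroup E] [Module ℝ E]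
  {s : Set E} {z : ι → E}

theorem ConvexOn.map_inv_card_smul_sum_le {φ : E → ℝ} (hφ : ConvexOn ℝ s φ)
    (hz : ∀ i, z i ∈ s) :
    φ ((Fintype.card ι : ℝ)⁻¹ • ∑ i, z i) ≤ (Fintype.card ι : ℝ)⁻¹ * ∑ i, φ (z i) := by
  rw [smul_sum, mul_sum]
  refine hφ.map_sum_le (fun _ _ => by positivity) ?_ (fun i _ => hz i)
  simp [card_univ]

theorem ConcaveOn.le_map_inv_card_smul_sum {φ : E → ℝ} (hφ : ConcaveOn ℝ s φ)
    (hz : ∀ i, z i ∈ s) :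
    (Fintype.card ι : ℝ)⁻¹ * ∑ i, φ (z i) ≤ φ ((Fintype.card ι : ℝ)⁻¹ • ∑ i, z i) := by
  rw [smul_sum, mul_sum]
  refine hφ.le_map_sum (fun _ _ => by positivity) ?_ (fun i _ => hz i)
  simp [card_univ]

end UniformAverage

theorem sum_inner_le_sSup_image {ι E : Type*} [Fintype ι] [NormedAddCommGroup E]
    [InnerProductSpace ℝ E] {Y : Set E} (hY : IsCompact Y) (g : ι → E) {y' : E} (hy' : y' ∈ Y) :
    ∑ i, ⟪g i, y'⟫ ≤ sSup ((fun y => ∑ i, ⟪g i, y⟫) '' Y) :=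
  le_csSup (hY.bddAbove_image (by fun_prop)) (Set.mem_image_of_mem _ hy')

theorem sInf_image_le_sum_inner {ι E : Type*} [Fintype ι] [NormedAddCommGroup E]
    [InnerProductSpace ℝ E] {X : Set E} (hX : IsCompact X) (f : ι → E) {x' : E} (hx' : x' ∈ X) :
    sInf ((fun x => ∑ i, ⟪f i, x⟫) '' X) ≤ ∑ i, ⟪f i, x'⟫ :=
  csInf_le (hX.bddBelow_image (by fun_prop)) (Set.mem_image_of_mem _ hx')

theorem average_payoff_sub_le_inv_card_mul_sum_inner {ι E E' : Type*} [Fintype ι] [Nonempty ι]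
    [NormedAddCommGroup E] [InnerProductSpace ℝ E] [NormedAddCommGroup E'] [InnerProductSpace ℝ E']
    {X : Set E} {Y : Set E'} {F : E → E' → ℝ}
    (hFconv : ∀ y ∈ Y, ConvexOn ℝ X (fun x' => F x' y))
    (hFconc : ∀ x ∈ X, ConcaveOn ℝ Y (fun y' => F x y'))
    {x : ι → E} {y : ι → E'} (hx : ∀ i, x i ∈ X) (hy : ∀ i, y i ∈ Y) {f : ι → E} {g : ι → E'}
    (hf : ∀ i, ∀ x' ∈ X, F (x i) (y i) + ⟪f i, x' - x i⟫ ≤ F x' (y i))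
    (hg : ∀ i, ∀ y' ∈ Y, F (x i) y' ≤ F (x i) (y i) + ⟪g i, y' - y i⟫)
    {x' : E} {y' : E'} (hx' : x' ∈ X) (hy' : y' ∈ Y) :
    F ((Fintype.card ι : ℝ)⁻¹ • ∑ i, x i) y' - F x' ((Fintype.card ι : ℝ)⁻¹ • ∑ i, y i)
      ≤ (Fintype.card ι : ℝ)⁻¹ *
        ((∑ i, ⟪g i, y'⟫ - ∑ i, ⟪g i, y i⟫) + (∑ i, ⟪f i, x i⟫ - ∑ i, ⟪f i, x'⟫)) := by
  have hround : ∀ i,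
      F (x i) y' - F x' (y i) ≤ ⟪g i, y'⟫ - ⟪g i, y i⟫ + (⟪f i, x i⟫ - ⟪f i, x'⟫) := by
    intro i
    have hfi := hf i x' hx'
    have hgi := hg i y' hy'
    rw [inner_sub_right] at hfi hgi
    linarith
  have hsum : ∑ i, (F (x i) y' - F x' (y i))
      ≤ (∑ i, ⟪g i, y'⟫ - ∑ i, ⟪g i, y i⟫) + (∑ i, ⟪f i, x i⟫ - ∑ i, ⟪f i, x'⟫) := by
    simpa only [sum_add_distrib, sum_sub_distrib] using sum_le_sum fun i _ => hround i
  calc F ((Fintype.card ι : ℝ)⁻¹ • ∑ i, x i) y' - F x' ((Fintype.card ι : ℝ)⁻¹ • ∑ i, y i)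
      ≤ (Fintype.card ι : ℝ)⁻¹ * ∑ i, F (x i) y' - (Fintype.card ι : ℝ)⁻¹ * ∑ i, F x' (y i) :=
        sub_le_sub ((hFconv y' hy').map_inv_card_smul_sum_le hx)
          ((hFconc x' hx').le_map_inv_card_smul_sum hy)
    _ = (Fintype.card ι : ℝ)⁻¹ * ∑ i, (F (x i) y' - F x' (y i)) := by
        rw [sum_sub_distrib, mul_sub]
    _ ≤ _ := mul_le_mul_of_nonneg_left hsum (by positivity)

theorem folk_theorem_general (n m T : ℕ) (hT : 1 ≤ T)
    (X : Set (EuclideanSpace ℝ (Fin n))) (Y : Set (EuclideanSpace ℝ (Fin m)))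
    (hXcomp : IsCompact X) (hYcomp : IsCompact Y)
    (F : EuclideanSpace ℝ (Fin n) → EuclideanSpace ℝ (Fin m) → ℝ)
    (hFconv : ∀ y ∈ Y, ConvexOn ℝ X (fun x' => F x' y))
    (hFconc : ∀ x ∈ X, ConcaveOn ℝ Y (fun y' => F x y'))
    (x : Fin T → EuclideanSpace ℝ (Fin n)) (y : Fin T → EuclideanSpace ℝ (Fin m))
    (hx : ∀ t, x t ∈ X) (hy : ∀ t, y t ∈ Y)
    (f : Fin T → EuclideanSpace ℝ (Fin n)) (g : Fin T → EuclideanSpace ℝ (Fin m))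
    -- `f t` is a subgradient of `F (·, y t)` at `x t`
    (hf : ∀ t, ∀ x' ∈ X, F (x t) (y t) + ⟪f t, x' - x t⟫ ≤ F x' (y t))
    -- `g t` is a supergradient of `F (x t, ·)` at `y t`
    (hg : ∀ t, ∀ y' ∈ Y, F (x t) y' ≤ F (x t) (y t) + ⟪g t, y' - y t⟫)
    (xbar : EuclideanSpace ℝ (Fin n)) (ybar : EuclideanSpace ℝ (Fin m))
    (hxbar : xbar = (T : ℝ)⁻¹ • ∑ t, x t)
    (hybar : ybar = (T : ℝ)⁻¹ • ∑ t, y t)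
    (RTx RTy : ℝ)
    (hRx : RTx = (∑ t, ⟪f t, x t⟫) - sInf ((fun x' => ∑ t, ⟪f t, x'⟫) '' X))
    (hRy : RTy = sSup ((fun y' => ∑ t, ⟪g t, y'⟫) '' Y) - ∑ t, ⟪g t, y t⟫) :
    sSup ((fun y' => F xbar y') '' Y) - sInf ((fun x' => F x' ybar) '' X)
      ≤ (RTx + RTy) / T := by
  have : Nonempty (Fin T) := ⟨⟨0, hT⟩⟩
  refine sSup_image_sub_sInf_image_le ⟨_, hx ⟨0, hT⟩⟩ ⟨_, hy ⟨0, hT⟩⟩ fun y' hy' x' hx' => ?_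
  have hgap := average_payoff_sub_le_inv_card_mul_sum_inner hFconv hFconc hx hy hf hg hx' hy'
  rw [Fintype.card_fin, ← hxbar, ← hybar] at hgap
  rw [div_eq_inv_mul]
  refine hgap.trans (mul_le_mul_of_nonneg_left ?_ (by positivity))
  linarith [sum_inner_le_sSup_image hYcomp g hy', sInf_image_le_sum_inner hXcomp f hx']

/-- the folk theorem connecting regret minimization to saddle-point solving:
for a convex-concave subdifferentiable payoff `F` on nonempty convex compact sets `X`, `Y`,
the duality gap of the uniform average iterates is bounded by the sum of the two players'
linearized regrets divided by the number of rounds `T`. -/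
theorem folk_theorem (n m T : ℕ) (hT : 1 ≤ T)
    (X : Set (EuclideanSpace ℝ (Fin n))) (Y : Set (EuclideanSpace ℝ (Fin m)))
    (hXne : X.Nonempty) (hXconv : Convex ℝ X) (hXcomp : IsCompact X)
    (hYne : Y.Nonempty) (hYconv : Convex ℝ Y) (hYcomp : IsCompact Y)
    (F : EuclideanSpace ℝ (Fin n) → EuclideanSpace ℝ (Fin m) → ℝ)
    (hFcont : ContinuousOn (fun p => F p.1 p.2) (X ×ˢ Y))
    (hFconv : ∀ y ∈ Y, ConvexOn ℝ X (fun x' => F x' y))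
    (hFconc : ∀ x ∈ X, ConcaveOn ℝ Y (fun y' => F x y'))
    (x : Fin T → EuclideanSpace ℝ (Fin n)) (y : Fin T → EuclideanSpace ℝ (Fin m))
    (hx : ∀ t, x t ∈ X) (hy : ∀ t, y t ∈ Y)
    (f : Fin T → EuclideanSpace ℝ (Fin n)) (g : Fin T → EuclideanSpace ℝ (Fin m))
    -- `f t` is a subgradient of `F (·, y t)` at `x t`
    (hf : ∀ t, ∀ x' ∈ X, F (x t) (y t) + ⟪f t, x' - x t⟫ ≤ F x' (y t))
    -- `g t` is a supergradient of `F (x t, ·)` at `y t`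
    (hg : ∀ t, ∀ y' ∈ Y, F (x t) y' ≤ F (x t) (y t) + ⟪g t, y' - y t⟫)
    (xbar : EuclideanSpace ℝ (Fin n)) (ybar : EuclideanSpace ℝ (Fin m))
    (hxbar : xbar = (T : ℝ)⁻¹ • ∑ t, x t)
    (hybar : ybar = (T : ℝ)⁻¹ • ∑ t, y t)
    (RTx RTy : ℝ)
    (hRx : RTx = (∑ t, ⟪f t, x t⟫) - sInf ((fun x' => ∑ t, ⟪f t, x'⟫) '' X))
    (hRy : RTy = sSup ((fun y' => ∑ t, ⟪g t, y'⟫) '' Y) - ∑ t, ⟪g t, y t⟫) :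
    sSup ((fun y' => F xbar y') '' Y) - sInf ((fun x' => F x' ybar) '' X)
      ≤ (RTx + RTy) / T :=
  folk_theorem_general n m T hT X Y hXcomp hYcomp F hFconv hFconc x y hx hy f g hf hg xbar ybar
    hxbar hybar RTx RTy hRx hRy
end
end

section
/- Let X ⊆ ℝⁿ and Y ⊆ ℝᵐ be nonempty convex compact sets and let F : ℝⁿ × ℝᵐ → ℝ be continuous on X × Y, convex in its first argument on X for every fixed y ∈ Y, and concave in its second argument on Y for every fixed x ∈ X. Let (x_t)_{t=1}^T ⊆ X and (y_t)_{t=1}^T ⊆ Y be arbitrary sequences, suppose for each t there exist f_t ∈ ℝⁿ and g_t ∈ ℝᵐ such that F(x, y_t) ≥ F(x_t, y_t) + ⟨f_t, x − x_t⟩ for all x ∈ X and F(x_t, y) ≤ F(x_t, y_t) + ⟨g_t, y − y_t⟩ for all y ∈ Y, and let ω_1, …, ω_T > 0 be positive weights with S_T = Σ_{t=1}^T ω_t. Set x̄_T = (1/S_T) Σ_{t=1}^T ω_t x_t and ȳ_T = (1/S_T) Σ_{t=1}^T ω_t y_t. Then sup_{y∈Y} F(x̄_T, y) − inf_{x∈X}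 F(x, ȳ_T) ≤ (1/S_T) · [ (sup_{y∈Y} Σ_{t=1}^T ω_t ⟨g_t, y⟩ − Σ_{t=1}^T ω_t ⟨g_t, y_t⟩) + (Σ_{t=1}^T ω_t ⟨f_t, x_t⟩ − inf_{x∈X} Σ_{t=1}^T ω_t ⟨f_t, x⟩) ]. -/
open scoped RealInnerProductSpace
open Finset

noncomputable section

/-!
Jensen's inequality for the convex `F (·, y)` gives `S · F (x̄, y) ≤ ∑ ω_t F (x_t, y)`, and the
supergradient inequalities bound the right side by `∑ ω_t F (x_t, y_t) + ∑ ω_t ⟪g_t, y - y_t⟫`.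
Symmetrically `S · F (x, ȳ) ≥ ∑ ω_t F (x_t, y_t) + ∑ ω_t ⟪f_t, x - x_t⟫`, which is the same bound
for `(y, x) ↦ -F x y`. In the duality gap the common term `∑ ω_t F (x_t, y_t)` cancels.
-/

theorem Real.sSup_image_neg {α : Type*} (h : α → ℝ) (s : Set α) :
    sSup ((fun a => -h a) '' s) = -sInf (h '' s) := by
  rw [← Set.image_image Neg.neg h, Set.image_neg_eq_neg, Real.sSup_neg]

section

variable {ι E E' : Type*} [Fintype ι]

theorem weighted_sum_le_of_supergradients [NormedAddCommGroup E'] [InnerProductSpace ℝ E']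
    (F : E → E' → ℝ) (x : ι → E) (y : ι → E')
    (g : ι → E') (ω : ι → ℝ) (hω : ∀ t, 0 ≤ ω t) (y' : E')
    (hg : ∀ t, F (x t) y' ≤ F (x t) (y t) + ⟪g t, y' - y t⟫) :
    ∑ t, ω t * F (x t) y' ≤
      ∑ t, ω t * F (x t) (y t) + (∑ t, ω t * ⟪g t, y'⟫ - ∑ t, ω t * ⟪g t, y t⟫) := by
  rw [← sum_sub_distrib, ← sum_add_distrib]
  refine sum_le_sum fun t _ => ?_
  have := mul_le_mul_of_nonneg_left (hg t) (hω t)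
  rw [inner_sub_right] at this
  linarith

theorem sSup_image_le_of_supergradients [AddCommGroup E] [Module ℝ E]
    [NormedAddCommGroup E'] [InnerProductSpace ℝ E'] {X : Set E} {Y : Set E'}
    (hYne : Y.Nonempty) (hYcomp : IsCompact Y) (F : E → E' → ℝ)
    (hFconv : ∀ y ∈ Y, ConvexOn ℝ X (fun x' => F x' y))
    (x : ι → E) (y : ι → E') (hx : ∀ t, x t ∈ X) (g : ι → E')
    (hg : ∀ t, ∀ y' ∈ Y, F (x t) y' ≤ F (x t) (y t) + ⟪g t, y' - y t⟫)
    (ω : ι → ℝ) (hω : ∀ t, 0 ≤ ω t) (hωpos : 0 < ∑ t, ω t) :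
    sSup ((fun y' => F (univ.centerMass ω x) y') '' Y) ≤
      (∑ t, ω t)⁻¹ * (∑ t, ω t * F (x t) (y t) +
        (sSup ((fun y' => ∑ t, ω t * ⟪g t, y'⟫) '' Y) - ∑ t, ω t * ⟪g t, y t⟫)) := by
  have hbdd : BddAbove ((fun y' => ∑ t, ω t * ⟪g t, y'⟫) '' Y) :=
    (hYcomp.image (by fun_prop)).bddAbove
  refine csSup_le (hYne.image _) ?_
  rintro _ ⟨y', hy', rfl⟩
  have jensen := (hFconv y' hy').map_centerMass_le (fun t _ => hω t) hωpos (fun t _ => hx t)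
  have regret := weighted_sum_le_of_supergradients F x y g ω hω y' (fun t => hg t y' hy')
  have hlin := le_csSup hbdd ⟨y', hy', rfl⟩
  calc F (univ.centerMass ω x) y' ≤ (∑ t, ω t)⁻¹ * ∑ t, ω t * F (x t) y' := jensen
    _ ≤ _ := by gcongr; linarith

theorem le_sInf_image_of_subgradients [NormedAddCommGroup E] [InnerProductSpace ℝ E]
    [AddCommGroup E'] [Module ℝ E'] {X : Set E} {Y : Set E'}
    (hXne : X.Nonempty) (hXcomp : IsCompact X) (F : E → E' → ℝ)
    (hFconc : ∀ x ∈ X, ConcaveOn ℝ Y (fun y' => F x y'))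
    (x : ι → E) (y : ι → E') (hy : ∀ t, y t ∈ Y) (f : ι → E)
    (hf : ∀ t, ∀ x' ∈ X, F (x t) (y t) + ⟪f t, x' - x t⟫ ≤ F x' (y t))
    (ω : ι → ℝ) (hω : ∀ t, 0 ≤ ω t) (hωpos : 0 < ∑ t, ω t) :
    (∑ t, ω t)⁻¹ * (∑ t, ω t * F (x t) (y t) -
        (∑ t, ω t * ⟪f t, x t⟫ - sInf ((fun x' => ∑ t, ω t * ⟪f t, x'⟫) '' X))) ≤
      sInf ((fun x' => F x' (univ.centerMass ω y)) '' X) := by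
  have h := sSup_image_le_of_supergradients hXne hXcomp (fun y' x' => -F x' y')
    (fun x' hx' => (hFconc x' hx').neg) y x hy (fun t => -f t)
    (fun t x' hx' => by have := hf t x' hx'; rw [inner_neg_left]; linarith) ω hω hωpos
  simp only [inner_neg_left, mul_neg, sum_neg_distrib, Real.sSup_image_neg] at h
  linarith

end

theorem weighted_folk_theorem_general (n m T : ℕ) (hT : 1 ≤ T)
    (X : Set (EuclideanSpace ℝ (Fin n))) (Y : Set (EuclideanSpace ℝ (Fin m)))
    (hXne : X.Nonempty) (hXcomp : IsCompact X)
    (hYne : Y.Nonempty) (hYcomp : IsCompact Y)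
    (F : EuclideanSpace ℝ (Fin n) → EuclideanSpace ℝ (Fin m) → ℝ)
    (hFconv : ∀ y ∈ Y, ConvexOn ℝ X (fun x' => F x' y))
    (hFconc : ∀ x ∈ X, ConcaveOn ℝ Y (fun y' => F x y'))
    (x : Fin T → EuclideanSpace ℝ (Fin n)) (y : Fin T → EuclideanSpace ℝ (Fin m))
    (hx : ∀ t, x t ∈ X) (hy : ∀ t, y t ∈ Y)
    (f : Fin T → EuclideanSpace ℝ (Fin n)) (g : Fin T → EuclideanSpace ℝ (Fin m))
    -- `f t` is a subgradient of `F (·, y t)` at `x t`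
    (hf : ∀ t, ∀ x' ∈ X, F (x t) (y t) + ⟪f t, x' - x t⟫ ≤ F x' (y t))
    -- `g t` is a supergradient of `F (x t, ·)` at `y t`
    (hg : ∀ t, ∀ y' ∈ Y, F (x t) y' ≤ F (x t) (y t) + ⟪g t, y' - y t⟫)
    (ω : Fin T → ℝ) (hω : ∀ t, 0 < ω t) (S : ℝ) (hS : S = ∑ t, ω t)
    (xbar : EuclideanSpace ℝ (Fin n)) (ybar : EuclideanSpace ℝ (Fin m))
    (hxbar : xbar = S⁻¹ • ∑ t, ω t • x t)
    (hybar : ybar = S⁻¹ • ∑ t, ω t • y t) :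
    sSup ((fun y' => F xbar y') '' Y) - sInf ((fun x' => F x' ybar) '' X)
      ≤ (1 / S) *
        ((sSup ((fun y' => ∑ t, ω t * ⟪g t, y'⟫) '' Y) - ∑ t, ω t * ⟪g t, y t⟫)
          + ((∑ t, ω t * ⟪f t, x t⟫) - sInf ((fun x' => ∑ t, ω t * ⟪f t, x'⟫) '' X))) := by
  have hωnonneg : ∀ t, 0 ≤ ω t := fun t => (hω t).le
  have hSpos : 0 < ∑ t, ω t := sum_pos (fun t _ => hω t) ⟨⟨0, hT⟩, mem_univ _⟩
  have hxbar' : xbar = univ.centerMass ω x := by rw [hxbar, hS]; rfl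
  have hybar' : ybar = univ.centerMass ω y := by rw [hybar, hS]; rfl
  have hmax := sSup_image_le_of_supergradients hYne hYcomp F hFconv x y hx g hg ω hωnonneg hSpos
  have hmin := le_sInf_image_of_subgradients hXne hXcomp F hFconc x y hy f hf ω hωnonneg hSpos
  rw [← hxbar', ← hS] at hmax
  rw [← hybar', ← hS] at hmin
  rw [one_div]
  linarith

/-- the weighted-average generalization of the folk theorem for saddle-point
solving: the duality gap of the `ω`-weighted average iterates is bounded by the sum of the
two players' `ω`-weighted linearized regrets divided by the total weight `S_T`. -/
theorem weighted_folk_theorem (n m T : ℕ) (hT : 1 ≤ T)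
    (X : Set (EuclideanSpace ℝ (Fin n))) (Y : Set (EuclideanSpace ℝ (Fin m)))
    (hXne : X.Nonempty) (hXconv : Convex ℝ X) (hXcomp : IsCompact X)
    (hYne : Y.Nonempty) (hYconv : Convex ℝ Y) (hYcomp : IsCompact Y)
    (F : EuclideanSpace ℝ (Fin n) → EuclideanSpace ℝ (Fin m) → ℝ)
    (hFcont : ContinuousOn (fun p => F p.1 p.2) (X ×ˢ Y))
    (hFconv : ∀ y ∈ Y, ConvexOn ℝ X (fun x' => F x' y))
    (hFconc : ∀ x ∈ X, ConcaveOn ℝ Y (fun y' => F x y'))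
    (x : Fin T → EuclideanSpace ℝ (Fin n)) (y : Fin T → EuclideanSpace ℝ (Fin m))
    (hx : ∀ t, x t ∈ X) (hy : ∀ t, y t ∈ Y)
    (f : Fin T → EuclideanSpace ℝ (Fin n)) (g : Fin T → EuclideanSpace ℝ (Fin m))
    -- `f t` is a subgradient of `F (·, y t)` at `x t`
    (hf : ∀ t, ∀ x' ∈ X, F (x t) (y t) + ⟪f t, x' - x t⟫ ≤ F x' (y t))
    -- `g t` is a supergradient of `F (x t, ·)` at `y t`
    (hg : ∀ t, ∀ y' ∈ Y, F (x t) y' ≤ F (x t) (y t) + ⟪g t, y' - y t⟫)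
    (ω : Fin T → ℝ) (hω : ∀ t, 0 < ω t) (S : ℝ) (hS : S = ∑ t, ω t)
    (xbar : EuclideanSpace ℝ (Fin n)) (ybar : EuclideanSpace ℝ (Fin m))
    (hxbar : xbar = S⁻¹ • ∑ t, ω t • x t)
    (hybar : ybar = S⁻¹ • ∑ t, ω t • y t) :
    sSup ((fun y' => F xbar y') '' Y) - sInf ((fun x' => F x' ybar) '' X)
      ≤ (1 / S) *
        ((sSup ((fun y' => ∑ t, ω t * ⟪g t, y'⟫) '' Y) - ∑ t, ω t * ⟪g t, y t⟫)
          + ((∑ t, ω t * ⟪f t, x t⟫) - sInf ((fun x' => ∑ t, ω t * ⟪f t, x'⟫) '' X))) :=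
  weighted_folk_theorem_general n m T hT X Y hXne hXcomp hYne hYcomp F hFconv hFconc x y hx hy f g
    hf hg ω hω S hS xbar ybar hxbar hybar
end
end

section
/- Let H be a real Hilbert space and C ⊆ H a nonempty closed convex cone with polar cone C° = {z ∈ H : ⟨z, w⟩ ≤ 0 for all w ∈ C}. Then for every u ∈ H, the distance from u to C satisfies dist(u, C) = sup{ ⟨u, w⟩ : w ∈ C°, ‖w‖ ≤ 1 }, and this supremum is attained. -/
/-!
Let `p` be the metric projection of `u` onto `C` and `v = u - p`. The variational inequality
`⟪v, w - p⟫ ≤ 0` for `w ∈ C`, tested at `w = 0` and `w = 2 • p`, gives `⟪v, p⟫ = 0`, and then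
`v ∈ C°`. For `w ∈ C°` with `‖w‖ ≤ 1` we get `⟪u, w⟫ = ⟪v, w⟫ + ⟪p, w⟫ ≤ ‖v‖`, with equality at
`w = ‖v‖⁻¹ • v`; and `‖v‖ = dist(u, C)`.
-/

open scoped RealInnerProductSpace

theorem Metric.infDist_eq_norm_sub_of_norm_eq_iInf {E : Type*} [SeminormedAddCommGroup E]
    {C : Set E} {u p : E} (hp : ‖u - p‖ = ⨅ w : C, ‖u - w‖) : Metric.infDist u C = ‖u - p‖ := by
  simp only [Metric.infDist_eq_iInf, hp, dist_eq_norm]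

section PolarCone

variable {H : Type*} [NormedAddCommGroup H] [InnerProductSpace ℝ H]

def polarCone (C : Set H) : Set H := {w | ∀ z ∈ C, ⟪w, z⟫ ≤ 0}

theorem smul_mem_polarCone {C : Set H} {w : H} (hw : w ∈ polarCone C) {c : ℝ} (hc : 0 ≤ c) :
    c • w ∈ polarCone C := fun z hz => by
  rw [real_inner_smul_left]
  exact mul_nonpos_of_nonneg_of_nonpos hc (hw z hz)

variable {C : Set H} {p v : H}

theorem inner_eq_zero_of_forall_inner_sub_nonpos (hcone : ∀ c : ℝ, 0 ≤ c → ∀ w ∈ C, c • w ∈ C)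
    (hp : p ∈ C) (hvar : ∀ w ∈ C, ⟪v, w - p⟫ ≤ 0) : ⟪v, p⟫ = 0 := by
  have h_zero : ⟪v, 0 - p⟫ ≤ 0 := hvar 0 (by simpa using hcone 0 le_rfl p hp)
  have h_two : ⟪v, (2 : ℝ) • p - p⟫ ≤ 0 := hvar _ (hcone 2 zero_le_two p hp)
  rw [zero_sub, inner_neg_right] at h_zero
  rw [two_smul, add_sub_cancel_right] at h_two
  linarith

theorem mem_polarCone_of_forall_inner_sub_nonpos (hcone : ∀ c : ℝ, 0 ≤ c → ∀ w ∈ C, c • w ∈ C)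
    (hp : p ∈ C) (hvar : ∀ w ∈ C, ⟪v, w - p⟫ ≤ 0) : v ∈ polarCone C := fun z hz => by
  have h := hvar z hz
  rwa [inner_sub_right, inner_eq_zero_of_forall_inner_sub_nonpos hcone hp hvar, sub_zero] at h

theorem isGreatest_inner_polarCone_unitBall (hp : p ∈ C) (hv : v ∈ polarCone C)
    (hvp : ⟪v, p⟫ = 0) :
    IsGreatest ((fun w => ⟪v + p, w⟫) '' {w | w ∈ polarCone C ∧ ‖w‖ ≤ 1}) ‖v‖ := by
  constructor
  -- no case split on `v = 0` is needed, since `0⁻¹ = 0` in `ℝ`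
  · refine ⟨‖v‖⁻¹ • v, ⟨smul_mem_polarCone hv (by positivity), ?_⟩, ?_⟩
    · simpa using inv_norm_smul_mem_unitClosedBall v
    · change ⟪v + p, ‖v‖⁻¹ • v⟫ = ‖v‖
      rw [real_inner_smul_right, inner_add_left, real_inner_self_eq_norm_sq, real_inner_comm v p,
        hvp, add_zero, sq, ← mul_assoc, inv_mul_mul_self]
  · rintro _ ⟨w, ⟨hw, hw_norm⟩, rfl⟩
    calc ⟪v + p, w⟫ = ⟪v, w⟫ + ⟪w, p⟫ := by rw [inner_add_left, real_inner_comm p w]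
      _ ≤ ⟪v, w⟫ := by linarith [hw p hp]
      _ ≤ ‖v‖ * ‖w‖ := real_inner_le_norm v w
      _ ≤ ‖v‖ := mul_le_of_le_one_right (norm_nonneg v) hw_norm

end PolarCone

/-- for a nonempty closed convex cone `C` in a real Hilbert space with polar
cone `C°`, the distance from any `u` to `C` equals `sup { ⟪u, w⟫ : w ∈ C°, ‖w‖ ≤ 1 }`,
and this supremum is attained (i.e. `dist(u, C)` is the greatest element of that set of
inner products). -/
theorem dist_to_cone_eq_sup_inner {H : Type*} [NormedAddCommGroup H] [InnerProductSpace ℝ H]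
    [CompleteSpace H]
    (C : Set H) (hne : C.Nonempty) (hclosed : IsClosed C) (hconv : Convex ℝ C)
    (hcone : ∀ c : ℝ, 0 ≤ c → ∀ w ∈ C, c • w ∈ C) (u : H) :
    IsGreatest ((fun w => ⟪u, w⟫) '' {w : H | (∀ z ∈ C, ⟪w, z⟫ ≤ 0) ∧ ‖w‖ ≤ 1})
      (Metric.infDist u C) := by
  obtain ⟨p, hp, hp_min⟩ := exists_norm_eq_iInf_of_complete_convex hne hclosed.isComplete hconv u
  have hvar := (norm_eq_iInf_iff_real_inner_le_zero hconv hp).mp hp_min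
  have h := isGreatest_inner_polarCone_unitBall hp
    (mem_polarCone_of_forall_inner_sub_nonpos hcone hp hvar)
    (inner_eq_zero_of_forall_inner_sub_nonpos hcone hp hvar)
  rwa [sub_add_cancel, ← Metric.infDist_eq_norm_sub_of_norm_eq_iInf hp_min] at h
end

section
/- Let Δ(n) be the probability simplex in ℝⁿ, C = cone({1} × Δ(n)) = {α·(1, x) : α ≥ 0, x ∈ Δ(n)} ⊆ ℝ^{1+n}, and C° = {(ỹ, ŷ) ∈ ℝ × ℝⁿ : ŷ_i ≤ −ỹ ∀i} its polar cone. For u = (ũ, û) ∈ ℝ^{1+n}, let (ỹ*, ŷ*) = π_{C°}(u) be the metric projection of u onto C°. Then ŷ*_i = min{−ỹ*, û_i} for every i, and the first coordinate ỹ* satisfies the equation ỹ* + Σ_{i=1}^n max{û_i + ỹ*, 0} = ũ. -/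
open scoped RealInnerProductSpace
open Finset

noncomputable section

/-- `ℝ^{1+n}`, with its first coordinate a scalar block, as a Euclidean (L2) space. -/
abbrev Rone (n : ℕ) := WithLp 2 (ℝ × EuclideanSpace ℝ (Fin n))

/-- `p` is a nearest point to `u` in `C` (the metric projection of `u` onto `C`). -/
def IsProjOn {H : Type*} [NormedAddCommGroup H] (C : Set H) (u p : H) : Prop :=
  p ∈ C ∧ ∀ w ∈ C, ‖u - p‖ ≤ ‖u - w‖

/-!
The projection `p` of `u` onto the closed convex set `C°` is characterised by the variational
inequality `⟪u - p, w - p⟫ ≤ 0` for `w ∈ C°`. Moving only the `i`-th coordinate of `p` inside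
`C°` shows that `p̂ᵢ` is the projection of `ûᵢ` onto the half-line `(-∞, -p̃]`, i.e.
`p̂ᵢ = min (-p̃) ûᵢ`. The vector `d = (1, -1, …, -1)` spans the lineality space `C° ∩ -C°`,
so `p ± d ∈ C°` and hence `⟪u - p, d⟫ = 0`, that is `ũ - p̃ = ∑ᵢ (ûᵢ - p̂ᵢ)`; and
`ûᵢ - min (-p̃) ûᵢ = max (ûᵢ + p̃) 0`.
-/

section Projection

variable {F : Type*} [NormedAddCommGroup F] [InnerProductSpace ℝ F] {K : Set F} {u p : F}

theorem IsProjOn.inner_sub_nonpos (hK : Convex ℝ K) (h : IsProjOn K u p) :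
    ∀ w ∈ K, ⟪u - p, w - p⟫ ≤ 0 := by
  have : Nonempty K := ⟨⟨p, h.1⟩⟩
  have hbdd : BddBelow (Set.range fun w : K ↦ ‖u - w‖) :=
    ⟨0, by rintro _ ⟨w, rfl⟩; exact norm_nonneg _⟩
  exact (norm_eq_iInf_iff_real_inner_le_zero hK h.1).1 <|
    le_antisymm (le_ciInf fun w ↦ h.2 w w.2) (ciInf_le hbdd ⟨p, h.1⟩)

theorem IsProjOn.inner_nonpos_of_add_mem {d : F} (hK : Convex ℝ K) (h : IsProjOn K u p)
    (hd : p + d ∈ K) : ⟪u - p, d⟫ ≤ 0 := by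
  simpa using h.inner_sub_nonpos hK (p + d) hd

end Projection

theorem eq_min_of_mul_nonpos {α : Type*} [CommRing α] [LinearOrder α] [IsStrictOrderedRing α]
    {a b c : α} (hb : b ≤ c) (h : (min c a - b) * (a - b) ≤ 0) : b = min c a := by
  rcases le_total c a with hca | hac
  · rw [min_eq_left hca] at h ⊢
    nlinarith
  · rw [min_eq_right hac] at h ⊢
    nlinarith

namespace Rone

variable {n : ℕ}

theorem inner_toLp_zero_single (x : Rone n) (i : Fin n) (c : ℝ) :
    ⟪x, WithLp.toLp 2 (0, EuclideanSpace.single i c)⟫ = c * x.ofLp.2 i := by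
  simp [WithLp.prod_inner_apply, EuclideanSpace.inner_single_right]

theorem inner_toLp_one_neg_one (x : Rone n) :
    ⟪x, WithLp.toLp 2 (1, WithLp.toLp 2 fun _ ↦ -1)⟫ = x.ofLp.1 - ∑ i, x.ofLp.2 i := by
  simp [WithLp.prod_inner_apply, PiLp.inner_apply, sub_eq_add_neg]

end Rone

def simplexPolarCone (n : ℕ) : Set (Rone n) := {z | ∀ i, z.ofLp.2 i ≤ -z.ofLp.1}

section SimplexPolarCone

variable {n : ℕ} {u p : Rone n}

theorem convex_simplexPolarCone (n : ℕ) : Convex ℝ (simplexPolarCone n) := by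
  intro x hx y hy a b ha hb _ i
  simp only [WithLp.ofLp_add, WithLp.ofLp_smul, Prod.fst_add, Prod.snd_add, Prod.smul_fst,
    Prod.smul_snd, PiLp.add_apply, PiLp.smul_apply, smul_eq_mul]
  nlinarith [mul_le_mul_of_nonneg_left (hx i) ha, mul_le_mul_of_nonneg_left (hy i) hb]

theorem add_smul_mem_simplexPolarCone {z : Rone n} (hz : z ∈ simplexPolarCone n) (t : ℝ) :
    z + t • WithLp.toLp 2 (1, WithLp.toLp 2 fun _ ↦ -1) ∈ simplexPolarCone n := by
  intro i
  simp only [WithLp.ofLp_add, WithLp.ofLp_smul, Prod.fst_add, Prod.snd_add, Prod.smul_fst,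
    Prod.smul_snd, PiLp.add_apply, PiLp.smul_apply, smul_eq_mul]
  linarith [hz i]

theorem IsProjOn.snd_eq_min_of_simplexPolarCone (h : IsProjOn (simplexPolarCone n) u p)
    (i : Fin n) : p.ofLp.2 i = min (-p.ofLp.1) (u.ofLp.2 i) := by
  have hmem : p + WithLp.toLp 2 (0, EuclideanSpace.single i
      (min (-p.ofLp.1) (u.ofLp.2 i) - p.ofLp.2 i)) ∈ simplexPolarCone n := by
    intro j
    rcases eq_or_ne j i with rfl | hji
    · simp
    · simpa [hji] using h.1 j
  have hineq := h.inner_nonpos_of_add_mem (convex_simplexPolarCone n) hmem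
  rw [Rone.inner_toLp_zero_single] at hineq
  exact eq_min_of_mul_nonpos (h.1 i) hineq

theorem IsProjOn.fst_sub_eq_sum_of_simplexPolarCone (h : IsProjOn (simplexPolarCone n) u p) :
    u.ofLp.1 - p.ofLp.1 = ∑ i, (u.ofLp.2 i - p.ofLp.2 i) := by
  have hK := convex_simplexPolarCone n
  have hplus := h.inner_nonpos_of_add_mem hK (add_smul_mem_simplexPolarCone h.1 1)
  have hminus := h.inner_nonpos_of_add_mem hK (add_smul_mem_simplexPolarCone h.1 (-1))
  rw [inner_smul_right, Rone.inner_toLp_one_neg_one] at hplus hminus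
  simp only [WithLp.ofLp_sub, Prod.fst_sub, Prod.snd_sub, PiLp.sub_apply] at hplus hminus
  linarith

end SimplexPolarCone

/-- let `C° = {(ỹ, ŷ) ∈ ℝ × ℝⁿ : ŷ_i ≤ −ỹ ∀i}` be the polar cone of
`cone({1} × Δ(n))`, and let `(ỹ*, ŷ*)` be the metric projection of `u = (ũ, û)` onto `C°`.
Then `ŷ*_i = min(−ỹ*, û_i)` for every `i`, and `ỹ* + Σ_i max(û_i + ỹ*, 0) = ũ`. -/
theorem projection_onto_polar_of_simplex_cone (n : ℕ) (u p : Rone n)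
    (hproj : IsProjOn {z : Rone n | ∀ i, z.ofLp.2 i ≤ -z.ofLp.1} u p) :
    (∀ i, p.ofLp.2 i = min (-p.ofLp.1) (u.ofLp.2 i)) ∧
    p.ofLp.1 + ∑ i, max (u.ofLp.2 i + p.ofLp.1) 0 = u.ofLp.1 := by
  have hproj : IsProjOn (simplexPolarCone n) u p := hproj
  have hcoord := hproj.snd_eq_min_of_simplexPolarCone
  have hgap : ∀ i, max (u.ofLp.2 i + p.ofLp.1) 0 = u.ofLp.2 i - p.ofLp.2 i := fun i ↦ by
    rw [hcoord i, ← max_sub_sub_left, sub_neg_eq_add, sub_self]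
  refine ⟨hcoord, ?_⟩
  rw [Finset.sum_congr rfl fun i _ ↦ hgap i, ← hproj.fst_sub_eq_sum_of_simplexPolarCone]
  ring
end
end

section
/- Let X ⊆ ℝⁿ be a nonempty convex compact set with κ = max_{x∈X} ‖x‖₂ > 0, let C = cone({κ} × X) ⊆ ℝ^{1+n} be the closed conic hull of {κ} × X, with polar cone C° and metric projection π_C. Let f_1, …, f_T ∈ ℝⁿ satisfy ‖f_t‖₂ ≤ L for all t. Let (x_t) ⊆ X and (u_t) ⊆ ℝ^{1+n} be the CBA⁺ iterates with uniform weights: x_1 ∈ X arbitrary; v_t = (⟨f_t, x_t⟩/κ, −f_t); u_1 = π_C(v_1); for t ≥ 1, x_{t+1} = (κ/ũ_t)·û_t if u_t = (ũ_t, û_t) ≠ 0 and x_{t+1} is an arbitrary point of X if u_t = 0; and u_{t+1} = π_C( (t·u_t + v_{t+1}) / (t+1) ). Then the linearly averaged regret satisfies ( Σ_{t=1}^T t·⟨f_t, x_t⟩ − min_{x∈X} Σ_{t=1}^T t·⟨f_t, x⟩ ) / (T(T+1)) ≤ 2κL/√T. -/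
open scoped RealInnerProductSpace
open Finset

noncomputable section

/-- The conic hull `cone({κ} × X) = {α • (κ, x) : α ≥ 0, x ∈ X} ⊆ ℝ^{1+n}`. -/
def coneOf (n : ℕ) (κ : ℝ) (X : Set (EuclideanSpace ℝ (Fin n))) : Set (Rone n) :=
  {z | ∃ a : ℝ, 0 ≤ a ∧ ∃ x ∈ X, z = a • (WithLp.toLp 2 (κ, x) : Rone n)}

/-!
Write `U t = (t + 1) • u t`. The projection onto a cone is positively homogeneous, so `U` is the
projected running sum `U (t + 1) = π_C (U t + v (t + 1))`. The decision `x (t + 1)` rescales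
`u t` exactly so that `⟪u t, v (t + 1)⟫ = 0`; with Pythagoras and `‖π_C z‖ ≤ ‖z‖` this gives
`‖U t‖² ≤ (t + 1) · 2L²`. For a comparator `y ∈ X`, the vector `g = (κ, y)` lies in `C` and in its
dual cone, and `⟪v t, g⟫ = ⟪f t, x t⟫ - ⟪f t, y⟫`. The variational inequality of the projection
gives `⟪v (t + 1), g⟫ ≤ ⟪U (t + 1), g⟫ - ⟪U t, g⟫`, and Abel summation with the weights `t + 1`
bounds the weighted regret by `T ⟪U (T - 1), g⟫ ≤ T ‖U (T - 1)‖ ‖g‖ ≤ T · √2 L √T · √2 κ`.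
-/

section ConeProjection

variable {H : Type*} [NormedAddCommGroup H] [InnerProductSpace ℝ H] {z p : H}

theorem IsProjOn.inner_sub_sub_nonpos {C : Set H} (hC : Convex ℝ C) (h : IsProjOn C z p)
    {w : H} (hw : w ∈ C) : ⟪z - p, w - p⟫ ≤ 0 := by
  have : Nonempty C := ⟨⟨p, h.1⟩⟩
  have hbdd : BddBelow (Set.range fun w : C => ‖z - w‖) :=
    ⟨0, by rintro _ ⟨w, rfl⟩; exact norm_nonneg _⟩
  refine (norm_eq_iInf_iff_real_inner_le_zero hC h.1).1 ?_ w hw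
  exact le_antisymm (le_ciInf fun w => h.2 w w.2) (ciInf_le hbdd ⟨p, h.1⟩)

variable {K : ConvexCone ℝ H}

namespace IsProjOn

-- Test the variational inequality with `w = 2 • p` and with `w = 2⁻¹ • p`.
theorem inner_sub_self_eq_zero (h : IsProjOn K z p) : ⟪z - p, p⟫ = 0 := by
  have h₂ := h.inner_sub_sub_nonpos K.convex (K.smul_mem two_pos h.1)
  have h₃ := h.inner_sub_sub_nonpos K.convex (K.smul_mem (inv_pos.2 two_pos) h.1)
  rw [show (2 : ℝ) • p - p = p by module] at h₂
  rw [show (2⁻¹ : ℝ) • p - p = (-2⁻¹ : ℝ) • p by module, inner_smul_right] at h₃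
  linarith

theorem inner_sub_nonpos_s13 (h : IsProjOn K z p) {w : H} (hw : w ∈ K) : ⟪z - p, w⟫ ≤ 0 := by
  simpa using h.inner_sub_sub_nonpos K.convex (K.add_mem hw h.1)

theorem norm_le (h : IsProjOn K z p) : ‖p‖ ≤ ‖z‖ := by
  have hz := norm_add_sq_eq_norm_sq_add_norm_sq_real
    (real_inner_comm p _ ▸ h.inner_sub_self_eq_zero)
  rw [add_sub_cancel] at hz
  nlinarith [norm_nonneg p, norm_nonneg z, mul_self_nonneg ‖z - p‖]

theorem smul (h : IsProjOn K z p) {c : ℝ} (hc : 0 < c) : IsProjOn K (c • z) (c • p) := by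
  refine ⟨K.smul_mem hc h.1, fun w hw => ?_⟩
  have hw' := h.2 _ (K.smul_mem (inv_pos.2 hc) hw)
  calc ‖c • z - c • p‖ = c * ‖z - p‖ := by rw [← smul_sub, norm_smul_of_nonneg hc.le]
    _ ≤ c * ‖z - c⁻¹ • w‖ := by gcongr
    _ = ‖c • z - w‖ := by rw [← norm_smul_of_nonneg hc.le, smul_sub, smul_inv_smul₀ hc.ne']

theorem of_inv_smul {c : ℝ} (h : IsProjOn K (c⁻¹ • z) p) (hc : 0 < c) : IsProjOn K z (c • p) := by
  simpa [smul_inv_smul₀ hc.ne'] using h.smul hc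

end IsProjOn

end ConeProjection

section ProjectedRunningSum

variable {H : Type*} [NormedAddCommGroup H] [InnerProductSpace ℝ H]

def IsProjectedRunningSum (C : Set H) (T : ℕ) (v U : ℕ → H) : Prop :=
  IsProjOn C (v 0) (U 0) ∧ ∀ t, t + 1 < T → IsProjOn C (U t + v (t + 1)) (U (t + 1))

namespace IsProjectedRunningSum

variable {K : ConvexCone ℝ H} {T : ℕ} {v U : ℕ → H}

theorem mem (hU : IsProjectedRunningSum K T v U) : ∀ t < T, U t ∈ K
  | 0, _ => hU.1.1
  | t + 1, ht => (hU.2 t ht).1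

theorem of_average {u : ℕ → H} (h0 : IsProjOn K (v 0) (u 0))
    (hrec : ∀ t, t + 1 < T →
      IsProjOn K (((t : ℝ) + 2)⁻¹ • (((t : ℝ) + 1) • u t + v (t + 1))) (u (t + 1))) :
    IsProjectedRunningSum K T v fun t => ((t : ℝ) + 1) • u t := by
  refine ⟨by simpa using h0, fun t ht => ?_⟩
  convert (hrec t ht).of_inv_smul (by positivity) using 2
  push_cast
  ring

theorem norm_sq_le (hU : IsProjectedRunningSum K T v U)
    (horth : ∀ t, t + 1 < T → ⟪U t, v (t + 1)⟫ = 0) {B : ℝ} (hv : ∀ t < T, ‖v t‖ ≤ B) :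
    ∀ t < T, ‖U t‖ ^ 2 ≤ (t + 1) * B ^ 2 := by
  have hv2 t (ht : t < T) : ‖v t‖ ^ 2 ≤ B ^ 2 := pow_le_pow_left₀ (norm_nonneg _) (hv t ht) 2
  intro t ht
  induction t with
  | zero =>
    have := pow_le_pow_left₀ (norm_nonneg _) hU.1.norm_le 2
    push_cast
    linarith [hv2 0 ht]
  | succ t ih =>
    have hstep := pow_le_pow_left₀ (norm_nonneg _) (hU.2 t ht).norm_le 2
    rw [norm_add_sq_real, horth t ht] at hstep
    push_cast
    linarith [ih (by omega), hv2 (t + 1) ht]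

-- The terms `⟪U t, g⟫` dropped by the Abel summation are nonnegative since `g` is in the dual cone.
theorem sum_mul_inner_le (hU : IsProjectedRunningSum K T v U) {g : H} (hgK : g ∈ K)
    (hg : ∀ w ∈ K, 0 ≤ ⟪w, g⟫) :
    ∀ t < T, ∑ s ∈ range (t + 1), ((s : ℝ) + 1) * ⟪v s, g⟫ ≤ (t + 1) * ⟪U t, g⟫ := by
  intro t ht
  induction t with
  | zero =>
    have := hU.1.inner_sub_nonpos_s13 hgK
    rw [inner_sub_left] at this
    simp only [sum_range_one, Nat.cast_zero, zero_add, one_mul]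
    linarith
  | succ t ih =>
    have hstep : ⟪v (t + 1), g⟫ ≤ ⟪U (t + 1), g⟫ - ⟪U t, g⟫ := by
      have := (hU.2 t ht).inner_sub_nonpos_s13 hgK
      rw [inner_sub_left, inner_add_left] at this
      linarith
    have hUt := hg _ (hU.mem t (by omega))
    rw [sum_range_succ]
    push_cast
    calc _ ≤ (t + 1) * ⟪U t, g⟫ + (t + 1 + 1) * (⟪U (t + 1), g⟫ - ⟪U t, g⟫) := by
          gcongr
          exact ih (by omega)
      _ ≤ (t + 1 + 1) * ⟪U (t + 1), g⟫ := by linarith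

theorem sum_mul_inner_le_mul_sqrt (hU : IsProjectedRunningSum K T v U) (hT : 1 ≤ T)
    (horth : ∀ t, t + 1 < T → ⟪U t, v (t + 1)⟫ = 0) {B : ℝ} (hv : ∀ t < T, ‖v t‖ ≤ B)
    {g : H} (hgK : g ∈ K) (hg : ∀ w ∈ K, 0 ≤ ⟪w, g⟫) {G : ℝ} (hgG : ‖g‖ ≤ G) :
    ∑ s ∈ range T, ((s : ℝ) + 1) * ⟪v s, g⟫ ≤ T * (G * (B * √T)) := by
  obtain ⟨m, rfl⟩ := Nat.exists_eq_add_of_le' hT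
  have hB : 0 ≤ B := (norm_nonneg _).trans (hv 0 (by omega))
  have hUm : ‖U m‖ ≤ B * √((m : ℝ) + 1) := by
    rw [← Real.sqrt_sq hB, ← Real.sqrt_mul (sq_nonneg B)]
    refine Real.le_sqrt_of_sq_le ?_
    linarith [hU.norm_sq_le horth hv m (by omega)]
  calc ∑ s ∈ range (m + 1), ((s : ℝ) + 1) * ⟪v s, g⟫ ≤ (m + 1) * ⟪U m, g⟫ :=
        hU.sum_mul_inner_le hgK hg m (by omega)
    _ ≤ (m + 1) * (‖U m‖ * ‖g‖) := by gcongr; exact real_inner_le_norm _ _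
    _ ≤ ((m + 1 : ℕ) : ℝ) * (G * (B * √(m + 1 : ℕ))) := by
        push_cast
        rw [mul_comm G]
        gcongr

end IsProjectedRunningSum

end ProjectedRunningSum

theorem WithLp.prod_norm_le_sqrt_two_mul {α β : Type*} [SeminormedAddCommGroup α]
    [SeminormedAddCommGroup β] (x : WithLp 2 (α × β)) {c : ℝ} (h₁ : ‖x.fst‖ ≤ c)
    (h₂ : ‖x.snd‖ ≤ c) : ‖x‖ ≤ √2 * c := by
  have hc : 0 ≤ c := (norm_nonneg _).trans h₁
  rw [WithLp.prod_norm_eq_of_L2, ← Real.sqrt_sq hc, ← Real.sqrt_mul zero_le_two]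
  gcongr
  nlinarith [pow_le_pow_left₀ (norm_nonneg _) h₁ 2, pow_le_pow_left₀ (norm_nonneg _) h₂ 2]

section CBA

variable {n : ℕ} {κ : ℝ} {X : Set (EuclideanSpace ℝ (Fin n))}

open scoped Pointwise in
def Convex.coneOf (hX : Convex ℝ X) (κ : ℝ) : ConvexCone ℝ (Rone n) where
  carrier := _root_.coneOf n κ X
  smul_mem' := by
    rintro c hc _ ⟨a, ha, y, hy, rfl⟩
    exact ⟨c * a, by positivity, y, hy, smul_smul c a _⟩
  add_mem' := by
    rintro _ ⟨a, ha, y, hy, rfl⟩ _ ⟨b, hb, y', hy', rfl⟩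
    obtain ⟨y'', hy'', hsum⟩ : a • y + b • y' ∈ (a + b) • X := by
      rw [hX.add_smul ha hb]
      exact Set.add_mem_add (Set.smul_mem_smul_set hy) (Set.smul_mem_smul_set hy')
    refine ⟨a + b, add_nonneg ha hb, y'', hy'', WithLp.ofLp_injective 2 (Prod.ext ?_ ?_)⟩
    · change a * κ + b * κ = (a + b) * κ
      ring
    · exact hsum.symm

@[simp]
theorem Convex.coe_coneOf (hX : Convex ℝ X) (κ : ℝ) :
    (hX.coneOf κ : Set (Rone n)) = _root_.coneOf n κ X :=
  rfl

theorem fst_ne_zero_of_mem_coneOf (hκ : κ ≠ 0) {w : Rone n} (hw : w ∈ coneOf n κ X)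
    (hw₀ : w ≠ 0) : w.ofLp.1 ≠ 0 := by
  obtain ⟨a, -, y, -, rfl⟩ := hw
  change a * κ ≠ 0
  rintro h
  obtain rfl : a = 0 := (mul_eq_zero.1 h).resolve_right hκ
  exact hw₀ (zero_smul ℝ _)

theorem inner_toLp_nonneg_of_mem_coneOf (hX : ∀ y ∈ X, ‖y‖ ≤ κ)
    {z : EuclideanSpace ℝ (Fin n)} (hz : ‖z‖ ≤ κ) {w : Rone n} (hw : w ∈ coneOf n κ X) :
    0 ≤ ⟪w, WithLp.toLp 2 (κ, z)⟫ := by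
  obtain ⟨a, ha, y, hy, rfl⟩ := hw
  have hyz : ‖y‖ * ‖z‖ ≤ κ * κ :=
    mul_le_mul (hX y hy) hz (norm_nonneg z) ((norm_nonneg y).trans (hX y hy))
  have := neg_abs_le ⟪y, z⟫
  have := abs_real_inner_le_norm y z
  rw [real_inner_smul_left, WithLp.prod_inner_apply]
  simp only [Real.inner_apply]
  nlinarith

def cbaPayoff (κ : ℝ) (f x : EuclideanSpace ℝ (Fin n)) : Rone n :=
  WithLp.toLp 2 (⟪f, x⟫ / κ, -f)

theorem inner_cbaPayoff_rescale_eq_zero (hκ : κ ≠ 0) {w : Rone n} (hw : w.ofLp.1 ≠ 0)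
    (f : EuclideanSpace ℝ (Fin n)) : ⟪w, cbaPayoff κ f ((κ / w.ofLp.1) • w.ofLp.2)⟫ = 0 := by
  simp only [cbaPayoff, WithLp.prod_inner_apply, Real.inner_apply, inner_smul_right,
    inner_neg_right, real_inner_comm f]
  field_simp
  ring

theorem inner_cbaPayoff_toLp (hκ : κ ≠ 0) (f x z : EuclideanSpace ℝ (Fin n)) :
    ⟪cbaPayoff κ f x, WithLp.toLp 2 (κ, z)⟫ = ⟪f, x⟫ - ⟪f, z⟫ := by
  simp only [cbaPayoff, WithLp.prod_inner_apply, Real.inner_apply, inner_neg_left]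
  field_simp
  ring

theorem norm_cbaPayoff_le (hκ : 0 < κ) {f x : EuclideanSpace ℝ (Fin n)} {L : ℝ}
    (hf : ‖f‖ ≤ L) (hx : ‖x‖ ≤ κ) : ‖cbaPayoff κ f x‖ ≤ √2 * L := by
  refine WithLp.prod_norm_le_sqrt_two_mul _ ?_ (by simpa [cbaPayoff] using hf)
  change ‖⟪f, x⟫ / κ‖ ≤ L
  rw [norm_div, Real.norm_of_nonneg hκ.le, div_le_iff₀ hκ]
  calc ‖⟪f, x⟫‖ ≤ ‖f‖ * ‖x‖ := norm_inner_le_norm f x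
    _ ≤ L * κ := mul_le_mul hf hx (norm_nonneg x) ((norm_nonneg f).trans hf)

theorem norm_toLp_le_sqrt_two_mul (z : EuclideanSpace ℝ (Fin n)) (hz : ‖z‖ ≤ κ) :
    ‖(WithLp.toLp 2 (κ, z) : Rone n)‖ ≤ √2 * κ :=
  WithLp.prod_norm_le_sqrt_two_mul _ (le_of_eq (Real.norm_of_nonneg ((norm_nonneg z).trans hz))) hz

theorem IsProjectedRunningSum.weighted_regret_le (hκ : 0 < κ) (hX : Convex ℝ X)
    (hXκ : ∀ y ∈ X, ‖y‖ ≤ κ) {T : ℕ} (hT : 1 ≤ T) {v U : ℕ → Rone n}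
    (hU : IsProjectedRunningSum (hX.coneOf κ) T v U)
    (horth : ∀ t, t + 1 < T → ⟪U t, v (t + 1)⟫ = 0) {f x : ℕ → EuclideanSpace ℝ (Fin n)}
    (hv : ∀ t < T, v t = cbaPayoff κ (f t) (x t)) {L : ℝ} (hL : ∀ t < T, ‖f t‖ ≤ L)
    (hx : ∀ t < T, ‖x t‖ ≤ κ) {y : EuclideanSpace ℝ (Fin n)} (hy : y ∈ X) :
    ∑ t ∈ range T, ((t : ℝ) + 1) * (⟪f t, x t⟫ - ⟪f t, y⟫) ≤ T * (2 * κ * L * √T) := by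
  have hbound := hU.sum_mul_inner_le_mul_sqrt hT horth
    (fun t ht => hv t ht ▸ norm_cbaPayoff_le hκ (hL t ht) (hx t ht))
    ⟨1, zero_le_one, y, hy, (one_smul ℝ _).symm⟩
    (fun w hw => inner_toLp_nonneg_of_mem_coneOf hXκ (hXκ y hy) hw)
    (norm_toLp_le_sqrt_two_mul y (hXκ y hy))
  have hsqrt2 : √2 * κ * (√2 * L) = 2 * κ * L := by
    rw [mul_mul_mul_comm, Real.mul_self_sqrt zero_le_two, mul_assoc]
  calc _ = ∑ t ∈ range T, ((t : ℝ) + 1) * ⟪v t, WithLp.toLp 2 (κ, y)⟫ := by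
        refine sum_congr rfl fun t ht => ?_
        rw [hv t (mem_range.1 ht), inner_cbaPayoff_toLp hκ.ne']
    _ ≤ T * (√2 * κ * (√2 * L * √T)) := hbound
    _ = T * (2 * κ * L * √T) := by rw [← hsqrt2]; ring

end CBA

theorem sub_csInf_image_le {α : Type*} {s : Set α} (hs : s.Nonempty) {F : α → ℝ} {a b : ℝ}
    (h : ∀ y ∈ s, a - F y ≤ b) : a - sInf (F '' s) ≤ b :=
  sub_le_comm.1 <| le_csInf (hs.image F) <| by
    rintro _ ⟨y, hy, rfl⟩
    exact sub_le_comm.1 (h y hy)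

theorem mul_mul_sqrt_div_mul_add_one_le {c T : ℝ} (hc : 0 ≤ c) (hT : 0 < T) :
    T * (c * √T) / (T * (T + 1)) ≤ c / √T := by
  have hsq := Real.mul_self_sqrt hT.le
  rw [div_le_div_iff₀ (by positivity) (Real.sqrt_pos.2 hT)]
  nlinarith [mul_nonneg hc hT.le]

-- Rounds are indexed from `0`: index `t` is round `t + 1` of the paper.
theorem cbaPlus_uniform_weights_linear_averaging_regret_general (n T : ℕ) (hT : 1 ≤ T)
    (X : Set (EuclideanSpace ℝ (Fin n)))
    (hXne : X.Nonempty) (hXconv : Convex ℝ X)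
    (κ L : ℝ) (hκ : IsGreatest ((fun x => ‖x‖) '' X) κ) (hκpos : 0 < κ)
    (f x : ℕ → EuclideanSpace ℝ (Fin n))
    (hL : ∀ t < T, ‖f t‖ ≤ L)
    (hxmem : ∀ t < T, x t ∈ X)
    (v u : ℕ → Rone n)
    (hv : ∀ t < T, v t = (WithLp.toLp 2 (⟪f t, x t⟫ / κ, -f t) : Rone n))
    (hu0 : IsProjOn (coneOf n κ X) (v 0) (u 0))
    (hurec : ∀ t : ℕ, t + 1 < T →
      IsProjOn (coneOf n κ X)
        ((((t : ℝ) + 2)⁻¹) • (((t : ℝ) + 1) • u t + v (t + 1))) (u (t + 1)))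
    (hxplay : ∀ t : ℕ, t + 1 < T → u t ≠ 0 →
      x (t + 1) = (κ / (u t).ofLp.1) • (u t).ofLp.2) :
    ((∑ t ∈ Finset.range T, ((t : ℝ) + 1) * ⟪f t, x t⟫)
        - sInf ((fun z => ∑ t ∈ Finset.range T, ((t : ℝ) + 1) * ⟪f t, z⟫) '' X))
      / ((T : ℝ) * ((T : ℝ) + 1))
      ≤ 2 * κ * L / Real.sqrt T := by
  have hXκ : ∀ y ∈ X, ‖y‖ ≤ κ := fun y hy => hκ.2 ⟨y, hy, rfl⟩
  have hL₀ : 0 ≤ L := (norm_nonneg _).trans (hL 0 hT)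
  set K := hXconv.coneOf κ
  have hU := IsProjectedRunningSum.of_average (K := K) hu0 hurec
  have horth : ∀ t, t + 1 < T → ⟪((t : ℝ) + 1) • u t, v (t + 1)⟫ = 0 := by
    intro t ht
    rcases eq_or_ne (u t) 0 with hu₀ | hu₀
    · simp [hu₀]
    have hu : u t ∈ K := (K.smul_mem_iff (by positivity)).1 (hU.mem t (by omega))
    rw [real_inner_smul_left, hv _ ht, hxplay t ht hu₀, ← cbaPayoff,
      inner_cbaPayoff_rescale_eq_zero hκpos.ne' (fst_ne_zero_of_mem_coneOf hκpos.ne' hu hu₀),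
      mul_zero]
  calc _ ≤ T * (2 * κ * L * √T) / (T * (T + 1)) := by
        gcongr
        refine sub_csInf_image_le hXne fun y hy => ?_
        simpa only [mul_sub, sum_sub_distrib] using hU.weighted_regret_le hκpos hXconv hXκ hT
          horth hv hL (fun t ht => hXκ _ (hxmem t ht)) hy
    _ ≤ 2 * κ * L / √T :=
        mul_mul_sqrt_div_mul_add_one_le (by positivity) (by exact_mod_cast hT)

/-- Theorem 2 of the paper: CBA⁺ with uniform weights on the payoffs is
compatible with linear averaging on the decisions and achieves average regret `≤ 2κL/√T`.
Sequences are indexed from `0`, so index `t ∈ {0, …, T−1}` corresponds to round `t+1`;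
the recursion `u_{t+1} = π_C((t·u_t + v_{t+1})/(t+1))` (1-based) becomes
`u (t+1) = π_C(((t+1)·u t + v (t+1))/(t+2))` (0-based). -/
theorem cbaPlus_uniform_weights_linear_averaging_regret (n T : ℕ) (hT : 1 ≤ T)
    (X : Set (EuclideanSpace ℝ (Fin n)))
    (hXne : X.Nonempty) (hXconv : Convex ℝ X) (hXcomp : IsCompact X)
    (κ L : ℝ) (hκ : IsGreatest ((fun x => ‖x‖) '' X) κ) (hκpos : 0 < κ)
    (f x : ℕ → EuclideanSpace ℝ (Fin n))
    (hL : ∀ t < T, ‖f t‖ ≤ L)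
    (hxmem : ∀ t < T, x t ∈ X)
    (v u : ℕ → Rone n)
    (hv : ∀ t < T, v t = (WithLp.toLp 2 (⟪f t, x t⟫ / κ, -f t) : Rone n))
    (hu0 : IsProjOn (coneOf n κ X) (v 0) (u 0))
    (hurec : ∀ t : ℕ, t + 1 < T →
      IsProjOn (coneOf n κ X)
        ((((t : ℝ) + 2)⁻¹) • (((t : ℝ) + 1) • u t + v (t + 1))) (u (t + 1)))
    (hxplay : ∀ t : ℕ, t + 1 < T → u t ≠ 0 →
      x (t + 1) = (κ / (u t).ofLp.1) • (u t).ofLp.2) :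
    ((∑ t ∈ Finset.range T, ((t : ℝ) + 1) * ⟪f t, x t⟫)
        - sInf ((fun z => ∑ t ∈ Finset.range T, ((t : ℝ) + 1) * ⟪f t, z⟫) '' X))
      / ((T : ℝ) * ((T : ℝ) + 1))
      ≤ 2 * κ * L / Real.sqrt T :=
  cbaPlus_uniform_weights_linear_averaging_regret_general n T hT X hXne hXconv κ L hκ hκpos f x hL
    hxmem v u hv hu0 hurec hxplay
end
end
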